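/- For the standard Brownian excursion W⁺₀ and its maximum M⁺₀ = max{W⁺₀(t) : t ∈ [0,1]}, the expectation satisfies E[M⁺₀] = √(π/2). -/

import Mathlib

/-!
For `t > 0` the survival function `P(M > t) = -2 ∑_{k ≥ 1} e^{-2k²t²} (1 - 4k²t²)` is minus the
derivative of `x ↦ 2x ∑_{k ≥ 1} e^{-2k²x²}`, which vanishes at `∞`, so this function is
`∫_x^∞ P(M > t) dt`. Jacobi's transformation `θ(c) = √(π/c) θ(π²/c)` of the theta function
`θ(c) = ∑_{n ∈ ℤ} e^{-cn²}` rewrites it as `√(π/2) θ(π²/(2x²)) - x`, which tends to `√(π/2)` as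
`x → 0⁺`. The layer-cake formula `E[M] = ∫_0^∞ P(M > t) dt` concludes.
-/

open MeasureTheory ProbabilityTheory Set Filter Topology Real

theorem integral_eq_integral_Ioi_of_toReal_measure_lt {α : Type*} [MeasurableSpace α]
    {μ : Measure α} [IsFiniteMeasure μ] {f : α → ℝ} (hf0 : 0 ≤ᵐ[μ] f) (hfm : AEMeasurable f μ)
    {g : ℝ → ℝ} (hg : IntegrableOn g (Ioi 0))
    (hfg : ∀ t ∈ Ioi (0 : ℝ), (μ {a | t < f a}).toReal = g t) :
    ∫ a, f a ∂μ = ∫ t in Ioi 0, g t := by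
  have hg0 : ∀ t ∈ Ioi (0 : ℝ), 0 ≤ g t := fun t ht => hfg t ht ▸ ENNReal.toReal_nonneg
  have hlevel : EqOn (fun t => μ {a | t < f a}) (fun t => ENNReal.ofReal (g t)) (Ioi 0) :=
    fun t ht => by dsimp only; rw [← hfg t ht, ENNReal.ofReal_toReal (measure_ne_top _ _)]
  rw [integral_eq_lintegral_of_nonneg_ae hf0 hfm.aestronglyMeasurable,
    lintegral_eq_lintegral_meas_lt μ hf0 hfm, setLIntegral_congr_fun measurableSet_Ioi hlevel,
    ← ofReal_integral_eq_lintegral_ofReal hg (ae_restrict_of_forall_mem measurableSet_Ioi hg0),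
    ENNReal.toReal_ofReal (setIntegral_nonneg measurableSet_Ioi hg0)]

namespace ExcursionMax

noncomputable def thetaTail (c : ℝ) : ℝ := ∑' k : ℕ, exp (-c * ((k : ℝ) + 1) ^ 2)

lemma summable_thetaTail {c : ℝ} (hc : 0 < c) :
    Summable fun k : ℕ => exp (-c * ((k : ℝ) + 1) ^ 2) :=
  summable_exp_nat_mul_of_ge (neg_lt_zero.2 hc) fun k => by nlinarith

lemma thetaTail_nonneg (c : ℝ) : 0 ≤ thetaTail c :=
  tsum_nonneg fun _ => (exp_pos _).le

lemma tsum_int_exp_neg_mul_sq {c : ℝ} (hc : 0 < c) :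
    ∑' n : ℤ, exp (-c * (n : ℝ) ^ 2) = 1 + 2 * thetaTail c := by
  have heven : Function.Even fun n : ℤ => exp (-c * (n : ℝ) ^ 2) := fun n => by simp
  have hnat : Summable fun n : ℕ => exp (-c * (n : ℝ) ^ 2) := by
    rw [← summable_nat_add_iff 1]
    exact_mod_cast summable_thetaTail hc
  rw [tsum_int_eq_zero_add_two_mul_tsum_pnat heven
      (Summable.of_nat_of_neg (by exact_mod_cast hnat) (by simpa using hnat)),
    tsum_pnat_eq_tsum_succ (f := fun n : ℕ => exp (-c * ((n : ℤ) : ℝ) ^ 2)), thetaTail]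
  simp

lemma one_add_two_mul_thetaTail_pi_mul {a : ℝ} (ha : 0 < a) :
    1 + 2 * thetaTail (π * a) = 1 / √a * (1 + 2 * thetaTail (π / a)) := by
  have h := tsum_exp_neg_mul_int_sq ha
  simp only [neg_mul, neg_div] at h
  rw [← tsum_int_exp_neg_mul_sq (by positivity), ← tsum_int_exp_neg_mul_sq (by positivity),
    sqrt_eq_rpow]
  simpa only [neg_mul] using h

lemma thetaTail_le {c : ℝ} (hc : 1 ≤ c) : thetaTail c ≤ exp (1 - c) * thetaTail 1 := by
  rw [thetaTail, thetaTail, ← tsum_mul_left]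
  refine (summable_thetaTail (by linarith)).tsum_le_tsum (fun k => ?_)
    ((summable_thetaTail one_pos).mul_left _)
  rw [← exp_add]
  gcongr
  nlinarith [mul_nonneg (sub_nonneg.2 hc) (by positivity : (0 : ℝ) ≤ (k : ℝ) ^ 2 + 2 * k)]

lemma tendsto_thetaTail_atTop : Tendsto thetaTail atTop (𝓝 0) := by
  have hexp : Tendsto (fun c => exp (1 - c) * thetaTail 1) atTop (𝓝 0) := by
    simpa [sub_eq_add_neg] using (tendsto_exp_atBot.comp
      (tendsto_atBot_add_const_left _ 1 tendsto_neg_atTop_atBot)).mul_const (thetaTail 1)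
  refine tendsto_of_tendsto_of_tendsto_of_le_of_le' tendsto_const_nhds hexp
    (Eventually.of_forall thetaTail_nonneg) ?_
  filter_upwards [eventually_ge_atTop 1] with c hc using thetaTail_le hc

lemma hasDerivAt_mul_exp_neg_sq_div_two (a x : ℝ) :
    HasDerivAt (fun t => t * exp (-(a * t) ^ 2 / 2))
      (exp (-(a * x) ^ 2 / 2) * (1 - (a * x) ^ 2)) x := by
  have hexponent : HasDerivAt (fun t => -(a * t) ^ 2 / 2) (-(a ^ 2 * x)) x := by
    refine ((((hasDerivAt_id' x).const_mul a).pow 2).neg.div_const 2).congr_deriv ?_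
    ring
  refine ((hasDerivAt_id' x).mul hexponent.exp).congr_deriv ?_
  ring

lemma norm_exp_neg_sq_div_two_mul_one_sub_sq_le (y : ℝ) :
    ‖exp (-y ^ 2 / 2) * (1 - y ^ 2)‖ ≤ 4 * exp (-(y ^ 2 / 4)) := by
  have hpoly : |1 - y ^ 2| ≤ 4 * exp (y ^ 2 / 4) := by
    rw [abs_le]
    constructor <;> nlinarith [add_one_le_exp (y ^ 2 / 4), sq_nonneg y]
  have hsplit : exp (-y ^ 2 / 2) = exp (-(y ^ 2 / 4)) * exp (-(y ^ 2 / 4)) := by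
    rw [← exp_add]; ring_nf
  calc ‖exp (-y ^ 2 / 2) * (1 - y ^ 2)‖ = exp (-y ^ 2 / 2) * |1 - y ^ 2| := by
        rw [norm_mul, norm_of_nonneg (exp_pos _).le, norm_eq_abs]
    _ ≤ exp (-y ^ 2 / 2) * (4 * exp (y ^ 2 / 4)) := by gcongr
    _ = 4 * exp (-(y ^ 2 / 4)) := by
        rw [hsplit, mul_left_comm, mul_assoc, ← exp_add]; simp

/-- `1 -` the distribution function of the excursion maximum, i.e. `P(M > t)` for `t > 0`. -/
noncomputable def maxSurvival (t : ℝ) : ℝ :=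
  -2 * ∑' k : ℕ, exp (-(2 * (k + 1 : ℝ) * t) ^ 2 / 2) * (1 - (2 * (k + 1 : ℝ) * t) ^ 2)

/-- The closed form of `x ↦ ∫_x^∞ maxSurvival`. -/
noncomputable def maxTailIntegral (x : ℝ) : ℝ := 2 * x * thetaTail (2 * x ^ 2)

lemma maxTailIntegral_eq_tsum (x : ℝ) :
    maxTailIntegral x = 2 * ∑' k : ℕ, x * exp (-(2 * (k + 1 : ℝ) * x) ^ 2 / 2) := by
  rw [maxTailIntegral, thetaTail, tsum_mul_left, mul_assoc]
  congr 3 with k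
  ring_nf

lemma hasDerivAt_maxTailIntegral {x : ℝ} (hx : 0 < x) :
    HasDerivAt maxTailIntegral (-maxSurvival x) x := by
  have hxmem : x ∈ Ioi (x / 2) := by simp only [mem_Ioi]; linarith
  have hbound (k : ℕ) (y : ℝ) (hy : y ∈ Ioi (x / 2)) :
      ‖exp (-(2 * (k + 1 : ℝ) * y) ^ 2 / 2) * (1 - (2 * (k + 1 : ℝ) * y) ^ 2)‖
        ≤ 4 * exp (-(x / 2) ^ 2 * ((k : ℝ) + 1) ^ 2) := by
    refine (norm_exp_neg_sq_div_two_mul_one_sub_sq_le _).trans ?_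
    have hxy : (x / 2) ^ 2 ≤ y ^ 2 := pow_le_pow_left₀ (by positivity) (le_of_lt hy) 2
    gcongr
    nlinarith [mul_le_mul_of_nonneg_left hxy (sq_nonneg ((k : ℝ) + 1))]
  have hsum := hasDerivAt_tsum_of_isPreconnected
    ((summable_thetaTail (by positivity : 0 < (x / 2) ^ 2)).mul_left 4) isOpen_Ioi
    isPreconnected_Ioi (fun k y _ => hasDerivAt_mul_exp_neg_sq_div_two (2 * (k + 1 : ℝ)) y)
    hbound hxmem (((summable_thetaTail (by positivity : 0 < 2 * x ^ 2)).mul_left x).congr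
      fun k => by ring_nf) hxmem
  rw [funext maxTailIntegral_eq_tsum, maxSurvival]
  exact (hsum.const_mul 2).congr_deriv (by ring)

lemma maxTailIntegral_nonneg {x : ℝ} (hx : 0 ≤ x) : 0 ≤ maxTailIntegral x :=
  mul_nonneg (by positivity) (thetaTail_nonneg _)

lemma tendsto_maxTailIntegral_atTop : Tendsto maxTailIntegral atTop (𝓝 0) := by
  have hlim : Tendsto (fun x : ℝ => 2 * exp 1 * thetaTail 1 * (x ^ 1 * exp (-x))) atTop (𝓝 0) := by
    simpa using (tendsto_pow_mul_exp_neg_atTop_nhds_zero 1).const_mul (2 * exp 1 * thetaTail 1)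
  refine tendsto_of_tendsto_of_tendsto_of_le_of_le' tendsto_const_nhds hlim ?_ ?_
  · filter_upwards [eventually_ge_atTop 0] with x hx using maxTailIntegral_nonneg hx
  filter_upwards [eventually_ge_atTop 1] with x hx
  calc maxTailIntegral x ≤ 2 * x * (exp (1 - 2 * x ^ 2) * thetaTail 1) := by
        rw [maxTailIntegral]; gcongr; exact thetaTail_le (by nlinarith)
    _ ≤ 2 * x * (exp (1 + -x) * thetaTail 1) := by
        gcongr
        · exact thetaTail_nonneg 1
        · nlinarith
    _ = 2 * exp 1 * thetaTail 1 * (x ^ 1 * exp (-x)) := by rw [exp_add]; ring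

lemma maxTailIntegral_eq {x : ℝ} (hx : 0 < x) :
    maxTailIntegral x = √(π / 2) * (1 + 2 * thetaTail (π ^ 2 / (2 * x ^ 2))) - x := by
  have hjacobi := one_add_two_mul_thetaTail_pi_mul (a := 2 * x ^ 2 / π) (by positivity)
  have hsqrt : √(2 * x ^ 2 / π) = x / √(π / 2) := by
    rw [show 2 * x ^ 2 / π = x ^ 2 / (π / 2) by ring, sqrt_div' _ (by positivity), sqrt_sq hx.le]
  rw [mul_div_cancel₀ _ pi_pos.ne', hsqrt, show π / (2 * x ^ 2 / π) = π ^ 2 / (2 * x ^ 2) by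
    field_simp] at hjacobi
  rw [maxTailIntegral, mul_assoc, show 2 * (x * thetaTail (2 * x ^ 2)) =
    x * (1 + 2 * thetaTail (2 * x ^ 2)) - x by ring, hjacobi]
  field_simp

lemma tendsto_maxTailIntegral_nhdsGT_zero :
    Tendsto maxTailIntegral (𝓝[>] 0) (𝓝 √(π / 2)) := by
  have hsq : Tendsto (fun x : ℝ => 2 * x ^ 2) (𝓝[>] 0) (𝓝[>] 0) := by
    refine tendsto_nhdsWithin_iff.2 ⟨?_, ?_⟩
    · exact ((continuous_const.mul (continuous_pow 2)).tendsto' 0 0 (by simp)).mono_left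
        nhdsWithin_le_nhds
    · filter_upwards [self_mem_nhdsWithin] with x (hx : 0 < x) using mem_Ioi.2 (by positivity)
  have hlarge : Tendsto (fun x : ℝ => π ^ 2 / (2 * x ^ 2)) (𝓝[>] 0) atTop := by
    simpa only [div_eq_mul_inv, Function.comp_def] using
      (tendsto_inv_nhdsGT_zero.comp hsq).const_mul_atTop (by positivity : 0 < π ^ 2)
  have hx : Tendsto (fun x : ℝ => x) (𝓝[>] 0) (𝓝 0) := tendsto_nhdsWithin_of_tendsto_nhds tendsto_id
  have h := (((tendsto_thetaTail_atTop.comp hlarge).const_mul 2).const_add 1).const_mul (√(π / 2))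
    |>.sub hx
  simp only [mul_zero, add_zero, mul_one, sub_zero] at h
  refine h.congr' ?_
  filter_upwards [self_mem_nhdsWithin] with x hx
  exact (maxTailIntegral_eq hx).symm

lemma integral_Ioi_maxSurvival (hnonneg : ∀ t ∈ Ioi (0 : ℝ), 0 ≤ maxSurvival t) :
    IntegrableOn maxSurvival (Ioi 0) ∧ ∫ t in Ioi 0, maxSurvival t = √(π / 2) := by
  classical
  -- `-maxTailIntegral`, extended continuously to `0`, is an antiderivative on `[0, ∞)`.
  set g := Function.update (fun x => -maxTailIntegral x) 0 (-√(π / 2))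
  have hcont : ContinuousWithinAt g (Ici 0) 0 := by
    rw [continuousWithinAt_update_same]
    simpa using tendsto_maxTailIntegral_nhdsGT_zero.neg
  have hderiv (x : ℝ) (hx : x ∈ Ioi 0) : HasDerivAt g (maxSurvival x) x := by
    have hgx : (fun y => -maxTailIntegral y) =ᶠ[𝓝 x] g := by
      filter_upwards [lt_mem_nhds (mem_Ioi.1 hx)] with y hy
      simp [g, hy.ne']
    simpa using ((hasDerivAt_maxTailIntegral hx).neg).congr_of_eventuallyEq hgx.symm
  have hlim : Tendsto g atTop (𝓝 0) := by
    refine (tendsto_maxTailIntegral_atTop.neg.congr' ?_).trans (by simp)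
    filter_upwards [eventually_gt_atTop 0] with y hy
    simp [g, hy.ne']
  refine ⟨integrableOn_Ioi_deriv_of_nonneg hcont hderiv hnonneg hlim, ?_⟩
  rw [integral_Ioi_of_hasDerivAt_of_nonneg hcont hderiv hnonneg hlim]
  simp [g]

end ExcursionMax

/-- If `M` is a nonnegative random variable whose distribution function is that of the maximum
`M⁺₀` of the standard Brownian excursion, namely
`P(M ≤ x) = 1 + 2·Σ_{k≥1} exp(-(2kx)²/2)(1 - (2kx)²)` for `x > 0`,
then `E[M] = √(π/2)`. -/
theorem excursion_max_expectation
    {Ω : Type*} [MeasurableSpace Ω] (P : Measure Ω) [IsProbabilityMeasure P]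
    (M : Ω → ℝ) (hmeas : Measurable M) (hpos : ∀ ω, 0 ≤ M ω)
    (hcdf : ∀ x : ℝ, 0 < x → (P {ω | M ω ≤ x}).toReal
      = 1 + 2 * ∑' k : ℕ,
          Real.exp (-(2 * (k + 1 : ℝ) * x) ^ 2 / 2) * (1 - (2 * (k + 1 : ℝ) * x) ^ 2)) :
    ∫ ω, M ω ∂P = Real.sqrt (Real.pi / 2) := by
  have hsurv (t : ℝ) (ht : t ∈ Ioi 0) :
      (P {ω | t < M ω}).toReal = ExcursionMax.maxSurvival t := by
    have hcompl : {ω | t < M ω} = {ω | M ω ≤ t}ᶜ := by ext; simp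
    rw [← measureReal_def, hcompl,
      probReal_compl_eq_one_sub (measurableSet_le hmeas measurable_const), measureReal_def,
      hcdf t ht, ExcursionMax.maxSurvival]
    ring
  obtain ⟨hint, hval⟩ :=
    ExcursionMax.integral_Ioi_maxSurvival fun t ht => hsurv t ht ▸ ENNReal.toReal_nonneg
  rw [integral_eq_integral_Ioi_of_toReal_measure_lt (ae_of_all _ hpos) hmeas.aemeasurable hint
    hsurv, hval]
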